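/- Let k and n be coprime positive integers, let Γ = {ak + bn : a, b ∈ ℕ}, and define G(q, a) = Σ_{Δ} q^{c(Δ)} (1 − a)^{m(Δ)} ∈ (ℤ[a])[[q]], the sum over all semigroup ideals Δ of Γ, where c(Δ) is the colength and m(Δ) the minimal number of generators of Δ. Then (1 − q^k) · G(q, a) equals the coefficient of ξ^n in the product ∏_{i=0}^{k−1} (1 + (1 − a) · Σ_{m ≥ 1} ξ^m q^{im}), the product being expanded in the power series ring (ℤ[a][[q]])[[ξ]] and the coefficient of ξ^n being an element of ℤ[a][[q]]. -/

import Mathlib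

/-- The minimal number of generators of a semigroup ideal `Δ` of a numerical semigroup
`Γ ⊆ ℕ`: the least `r` such that `Δ = (a₁ + Γ) ∪ ⋯ ∪ (a_r + Γ)` for some `a_j ∈ Δ`. -/
noncomputable def semigroupIdealMinGens (Γ Δ : Set ℕ) : ℕ :=
  sInf {r : ℕ | ∃ a : Fin r → ℕ, (∀ j, a j ∈ Δ) ∧ Δ = ⋃ j, ((a j + ·) '' Γ)}

/-- A semigroup ideal of `Γ`: a nonempty subset `Δ ⊆ Γ` with `Δ + Γ ⊆ Δ`. -/
def IsSemigroupIdeal (Γ Δ : Set ℕ) : Prop :=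
  Δ.Nonempty ∧ Δ ⊆ Γ ∧ ∀ δ ∈ Δ, ∀ γ ∈ Γ, δ + γ ∈ Δ

/-!
An ideal `Δ` of `⟨k, n⟩` is determined by the heights `x i` at which it meets the residue
columns `{i * n + t * k | t ∈ ℕ}`, `i < k`. Adding `n` moves column `i` to column `i + 1` and
column `k - 1` to column `0` raised by `n`, so these heights form a staircase: `x` is antitone
and `x 0 ≤ x (k - 1) + n`. The colength is `∑ x i`, and the minimal generators are the bottom
cells of the columns into which the staircase drops, so `m(Δ)` counts the nonzero drops `g i`.
The drops form a composition of `n` into `k` parts which, together with the last height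
`s = x (k - 1)`, parametrizes `Δ` bijectively, with colength `k * s + ∑ i * g i`. Summing over
`s` gives the factor `1 / (1 - q ^ k)`; the coefficient of `ξ ^ n` in the product is the sum of
`(1 - a) ^ #{i | g i ≠ 0} * q ^ (∑ i * g i)` over those compositions.

The development writes `k + 1` for `k`, so that columns are indexed by `Fin (k + 1)`.
-/

open Finset

def minimalGenerators (Γ Δ : Set ℕ) : Set ℕ :=
  {δ ∈ Δ | ∀ δ' ∈ Δ, ∀ γ ∈ Γ, δ' + γ = δ → γ = 0}

section MinimalGenerators

variable {Γ : AddSubmonoid ℕ} {Δ : Set ℕ}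

lemma exists_mem_minimalGenerators_add {δ : ℕ} (hδ : δ ∈ Δ) :
    ∃ μ ∈ minimalGenerators Γ Δ, ∃ γ ∈ Γ, μ + γ = δ := by
  induction δ using Nat.strong_induction_on with
  | _ δ ih =>
    by_cases hmin : δ ∈ minimalGenerators Γ Δ
    · exact ⟨δ, hmin, 0, Γ.zero_mem, add_zero δ⟩
    · obtain ⟨δ', hδ', γ, hγ, rfl, hγ0⟩ :
          ∃ δ' ∈ Δ, ∃ γ ∈ Γ, δ' + γ = δ ∧ γ ≠ 0 := by
        simpa [minimalGenerators, hδ] using hmin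
      obtain ⟨μ, hμ, γ', hγ', rfl⟩ := ih δ' (by omega) hδ'
      exact ⟨μ, hμ, γ' + γ, Γ.add_mem hγ' hγ, (add_assoc _ _ _).symm⟩

lemma minimalGenerators_subset_range {r : ℕ} {a : Fin r → ℕ} (ha : ∀ j, a j ∈ Δ)
    (hΔ : Δ = ⋃ j, (a j + ·) '' Γ) : minimalGenerators Γ Δ ⊆ Set.range a := by
  intro μ hμ
  obtain ⟨j, γ, hγ, hjμ⟩ := Set.mem_iUnion.mp (hΔ ▸ hμ.1)
  have hγ0 : γ = 0 := hμ.2 (a j) (ha j) γ hγ hjμ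
  exact ⟨j, by simpa [hγ0] using hjμ⟩

theorem semigroupIdealMinGens_eq_ncard (hΔ : ∀ δ ∈ Δ, ∀ γ ∈ Γ, δ + γ ∈ Δ) :
    semigroupIdealMinGens Γ Δ = (minimalGenerators Γ Δ).ncard := by
  unfold semigroupIdealMinGens
  set M := minimalGenerators Γ Δ
  set S := {r : ℕ | ∃ a : Fin r → ℕ, (∀ j, a j ∈ Δ) ∧ Δ = ⋃ j, ((a j + ·) '' Γ)}
  have lower : ∀ r ∈ S, M.Finite ∧ M.ncard ≤ r := by
    rintro r ⟨a, ha, hΔa⟩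
    have hM := minimalGenerators_subset_range ha hΔa
    refine ⟨(Set.finite_range a).subset hM, ?_⟩
    calc M.ncard ≤ (Set.range a).ncard := Set.ncard_le_ncard hM (Set.finite_range a)
      _ ≤ r := by simpa using Set.ncard_image_le (f := a) (s := Set.univ) Set.finite_univ
  -- If `M` is infinite, no finite family generates `Δ`, and both sides are junk `0`s.
  by_cases hfin : M.Finite
  · have : Finite M := hfin
    let a : Fin M.ncard → ℕ := fun j => (Finite.equivFin M).symm j
    have hrange : Set.range a = M :=
      ((Finite.equivFin M).symm.surjective.range_comp _).trans Subtype.range_coe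
    have haM : ∀ j, a j ∈ M := fun j => hrange ▸ Set.mem_range_self j
    have hgen : M.ncard ∈ S := by
      refine ⟨a, fun j => (haM j).1, ?_⟩
      ext δ
      simp only [Set.mem_iUnion, Set.mem_image]
      constructor
      · intro hδ
        obtain ⟨μ, hμ, γ, hγ, rfl⟩ := exists_mem_minimalGenerators_add (Γ := Γ) hδ
        obtain ⟨j, rfl⟩ := hrange.symm.subset hμ
        exact ⟨j, γ, hγ, rfl⟩
      · rintro ⟨j, γ, hγ, rfl⟩
        exact hΔ _ (haM j).1 γ hγ
    exact le_antisymm (Nat.sInf_le hgen) (le_csInf ⟨_, hgen⟩ fun r hr => (lower r hr).2)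
  · rw [Set.Infinite.ncard hfin, Nat.sInf_eq_zero]
    exact Or.inr (Set.eq_empty_of_forall_notMem fun r hr => hfin (lower r hr).1)

end MinimalGenerators

section Closure

lemma eq_zero_or_exists_add_of_mem_closure {M : Type*} [AddMonoid M] {s : Set M} {γ : M}
    (hγ : γ ∈ AddSubmonoid.closure s) :
    γ = 0 ∨ ∃ γ' ∈ AddSubmonoid.closure s, ∃ g ∈ s, γ' + g = γ := by
  induction hγ using AddSubmonoid.closure_induction with
  | mem g hg => exact Or.inr ⟨0, AddSubmonoid.zero_mem _, g, hg, zero_add g⟩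
  | zero => exact Or.inl rfl
  | add x y hx _ ihx ihy =>
    rcases ihy with rfl | ⟨y', hy', g, hg, rfl⟩
    · simpa using ihx
    · exact Or.inr ⟨x + y', AddSubmonoid.add_mem _ hx hy', g, hg, add_assoc _ _ _⟩

variable {s Δ : Set ℕ}

lemma add_mem_of_forall_add_generator_mem (h : ∀ δ ∈ Δ, ∀ g ∈ s, δ + g ∈ Δ) {δ γ : ℕ}
    (hδ : δ ∈ Δ) (hγ : γ ∈ AddSubmonoid.closure s) : δ + γ ∈ Δ := by
  induction hγ using AddSubmonoid.closure_induction generalizing δ with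
  | mem g hg => exact h δ hδ g hg
  | zero => exact hδ
  | add x y _ _ ihx ihy => exact add_assoc δ x y ▸ ihy (ihx hδ)

lemma mem_minimalGenerators_closure_iff (h0 : 0 ∉ s)
    (hΔ : ∀ δ ∈ Δ, ∀ γ ∈ AddSubmonoid.closure s, δ + γ ∈ Δ) {δ : ℕ} :
    δ ∈ minimalGenerators (AddSubmonoid.closure s) Δ ↔
      δ ∈ Δ ∧ ∀ δ' ∈ Δ, ∀ g ∈ s, δ' + g ≠ δ := by
  refine ⟨fun ⟨hδ, hmin⟩ => ⟨hδ, fun δ' hδ' g hg hg' =>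
    h0 (hmin δ' hδ' g (AddSubmonoid.subset_closure hg) hg' ▸ hg)⟩, fun ⟨hδ, hmin⟩ => ⟨hδ, ?_⟩⟩
  intro δ' hδ' γ hγ hsum
  rcases eq_zero_or_exists_add_of_mem_closure hγ with hγ0 | ⟨γ', hγ', g, hg, rfl⟩
  · exact hγ0
  · exact absurd (by rw [← hsum, add_assoc]) (hmin _ (hΔ δ' hδ' γ' hγ') g hg)

end Closure

section Staircase

variable {k n : ℕ}

def cell (n : ℕ) (i : Fin (k + 1)) (t : ℕ) : ℕ := i * n + t * (k + 1)

lemma cell_inj (hkn : Nat.Coprime (k + 1) n) {i j : Fin (k + 1)} {t u : ℕ} :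
    cell n i t = cell n j u ↔ i = j ∧ t = u := by
  refine ⟨fun h => ?_, fun ⟨hij, htu⟩ => hij ▸ htu ▸ rfl⟩
  have hmod : (i : ℕ) * n ≡ j * n [MOD k + 1] := by
    simpa [cell, Nat.ModEq, Nat.add_mul_mod_self_right] using congrArg (· % (k + 1)) h
  have hij : i = j := Fin.ext <| Nat.ModEq.eq_of_lt_of_lt
    (Nat.ModEq.cancel_right_of_coprime hkn hmod) i.isLt j.isLt
  subst hij
  exact ⟨rfl, Nat.eq_of_mul_eq_mul_right k.succ_pos (by simpa [cell] using h)⟩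

lemma mem_closure_iff_exists_cell {m : ℕ} :
    m ∈ AddSubmonoid.closure {k + 1, n} ↔ ∃ (i : Fin (k + 1)) (t : ℕ), cell n i t = m := by
  rw [AddSubmonoid.mem_closure_pair]
  constructor
  · rintro ⟨a, b, rfl⟩
    refine ⟨⟨b % (k + 1), Nat.mod_lt _ k.succ_pos⟩, a + b / (k + 1) * n, ?_⟩
    simp only [cell, smul_eq_mul]
    nth_rw 3 [← Nat.mod_add_div b (k + 1)]
    ring
  · rintro ⟨i, t, rfl⟩
    exact ⟨t, i, by simp [cell, add_comm, mul_comm]⟩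

lemma cell_add_succ (n : ℕ) (i : Fin (k + 1)) (t : ℕ) :
    cell n i t + (k + 1) = cell n i (t + 1) := by
  simp only [cell]; ring

lemma cell_castSucc_add (n : ℕ) (j : Fin k) (t : ℕ) :
    cell n j.castSucc t + n = cell n j.succ t := by
  simp only [cell, Fin.val_castSucc, Fin.val_succ]; ring

lemma cell_last_add (n t : ℕ) : cell n (Fin.last k) t + n = cell n (0 : Fin (k + 1)) (t + n) := by
  simp only [cell, Fin.val_last, Fin.val_zero]; ring

def IsStaircase (n : ℕ) (x : Fin (k + 1) → ℕ) : Prop :=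
  Antitone x ∧ x 0 ≤ x (Fin.last k) + n

def staircaseIdeal (n : ℕ) (x : Fin (k + 1) → ℕ) : Set ℕ :=
  {m | ∃ i t, x i ≤ t ∧ cell n i t = m}

def gaps (n : ℕ) (x : Fin (k + 1) → ℕ) : Fin (k + 1) → ℕ :=
  Fin.cons (x (Fin.last k) + n - x 0) fun j => x j.castSucc - x j.succ

variable {x : Fin (k + 1) → ℕ}

@[simp]
lemma gaps_zero : gaps n x 0 = x (Fin.last k) + n - x 0 := rfl

@[simp]
lemma gaps_succ (j : Fin k) : gaps n x j.succ = x j.castSucc - x j.succ := rfl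

lemma cell_mem_staircaseIdeal_iff (hkn : Nat.Coprime (k + 1) n) {i : Fin (k + 1)} {t : ℕ} :
    cell n i t ∈ staircaseIdeal n x ↔ x i ≤ t := by
  refine ⟨?_, fun h => ⟨i, t, h, rfl⟩⟩
  rintro ⟨j, u, hju, h⟩
  obtain ⟨rfl, rfl⟩ := (cell_inj hkn).mp h
  exact hju

lemma isSemigroupIdeal_staircaseIdeal (hx : IsStaircase n x) :
    IsSemigroupIdeal (AddSubmonoid.closure {k + 1, n}) (staircaseIdeal n x) := by
  refine ⟨⟨_, 0, _, le_rfl, rfl⟩, fun m ⟨i, t, _, hm⟩ => mem_closure_iff_exists_cell.mpr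
    ⟨i, t, hm⟩, fun δ hδ γ hγ => add_mem_of_forall_add_generator_mem ?_ hδ hγ⟩
  rintro _ ⟨i, t, hit, rfl⟩ g (hg | hg : g = k + 1 ∨ g = n) <;> rw [hg]
  · exact ⟨i, t + 1, by omega, (cell_add_succ n i t).symm⟩
  · induction i using Fin.lastCases with
    | last => exact ⟨0, t + n, by have := hx.2; omega, (cell_last_add n t).symm⟩
    | cast j =>
      exact ⟨j.succ, t, (hx.1 (Fin.castSucc_le_succ j)).trans hit,
        (cell_castSucc_add n j t).symm⟩

lemma exists_isStaircase_staircaseIdeal_eq {Δ : Set ℕ}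
    (hΔ : IsSemigroupIdeal (AddSubmonoid.closure {k + 1, n}) Δ) :
    ∃ x : Fin (k + 1) → ℕ, IsStaircase n x ∧ staircaseIdeal n x = Δ := by
  obtain ⟨⟨δ, hδ⟩, hΔΓ, hΔadd⟩ := hΔ
  have hΓk : k + 1 ∈ AddSubmonoid.closure {k + 1, n} := AddSubmonoid.subset_closure (by simp)
  have hΓn : n ∈ AddSubmonoid.closure {k + 1, n} := AddSubmonoid.subset_closure (by simp)
  have hcol_ne : ∀ i : Fin (k + 1), ∃ t, cell n i t ∈ Δ := by
    intro i
    obtain ⟨d, s, rfl⟩ := mem_closure_iff_exists_cell.mp (hΔΓ hδ)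
    obtain ⟨e, he⟩ := Nat.exists_eq_add_of_le d.isLt.le
    refine ⟨s + n, ?_⟩
    convert hΔadd _ hδ ((e + i) * n) (AddSubmonoid.nsmul_mem _ hΓn _) using 1
    simp only [cell, he]
    ring
  have hcol_up : ∀ (i : Fin (k + 1)) t u, t ≤ u → cell n i t ∈ Δ → cell n i u ∈ Δ := by
    intro i t u htu ht
    obtain ⟨v, rfl⟩ := Nat.exists_eq_add_of_le htu
    convert hΔadd _ ht (v * (k + 1)) (AddSubmonoid.nsmul_mem _ hΓk _) using 1
    simp only [cell]
    ring
  classical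
  let x i := Nat.find (hcol_ne i)
  have hx : ∀ i t, cell n i t ∈ Δ ↔ x i ≤ t := fun i t =>
    ⟨fun h => Nat.find_min' _ h, fun h => hcol_up i _ t h (Nat.find_spec (hcol_ne i))⟩
  refine ⟨x, ⟨Fin.antitone_iff_succ_le.mpr fun j => ?_, ?_⟩, ?_⟩
  · rw [← hx, ← cell_castSucc_add]
    exact hΔadd _ ((hx _ _).mpr le_rfl) n hΓn
  · rw [← hx, ← cell_last_add]
    exact hΔadd _ ((hx _ _).mpr le_rfl) n hΓn
  · ext m
    refine ⟨fun ⟨i, t, hit, hm⟩ => hm ▸ (hx i t).mpr hit, fun hm => ?_⟩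
    obtain ⟨i, t, rfl⟩ := mem_closure_iff_exists_cell.mp (hΔΓ hm)
    exact ⟨i, t, (hx i t).mp hm, rfl⟩

lemma staircaseIdeal_injective (hkn : Nat.Coprime (k + 1) n) :
    Function.Injective (staircaseIdeal (k := k) n) := by
  intro x y h
  funext i
  apply le_antisymm
  · rw [← cell_mem_staircaseIdeal_iff hkn, h, cell_mem_staircaseIdeal_iff hkn]
  · rw [← cell_mem_staircaseIdeal_iff hkn, ← h, cell_mem_staircaseIdeal_iff hkn]

lemma ncard_closure_diff_staircaseIdeal (hkn : Nat.Coprime (k + 1) n) (x : Fin (k + 1) → ℕ) :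
    ((AddSubmonoid.closure {k + 1, n} : Set ℕ) \ staircaseIdeal n x).ncard = ∑ i, x i := by
  classical
  have hdiff : (AddSubmonoid.closure {k + 1, n} : Set ℕ) \ staircaseIdeal n x =
      ↑((Finset.univ.sigma fun i => Finset.range (x i)).image fun p => cell n p.1 p.2) := by
    ext m
    simp only [Set.mem_sdiff, SetLike.mem_coe, mem_closure_iff_exists_cell, Finset.coe_image,
      Set.mem_image, Finset.mem_sigma, Finset.mem_univ, Finset.mem_range,
      true_and, Sigma.exists]
    constructor
    · rintro ⟨⟨i, t, rfl⟩, hm⟩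
      exact ⟨i, t, not_le.mp ((cell_mem_staircaseIdeal_iff hkn).not.mp hm), rfl⟩
    · rintro ⟨i, t, ht, rfl⟩
      exact ⟨⟨i, t, rfl⟩, (cell_mem_staircaseIdeal_iff hkn).not.mpr (not_le.mpr ht)⟩
  rw [hdiff, Set.ncard_coe_finset, Finset.card_image_of_injective, Finset.card_sigma]
  · simp
  · rintro ⟨i, t⟩ ⟨j, u⟩ h
    obtain ⟨rfl, rfl⟩ := (cell_inj hkn).mp h
    rfl

lemma exists_add_succ_eq_cell_iff (hkn : Nat.Coprime (k + 1) n) {i : Fin (k + 1)} {t : ℕ} :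
    (∃ δ ∈ staircaseIdeal n x, δ + (k + 1) = cell n i t) ↔ x i < t := by
  constructor
  · rintro ⟨_, ⟨j, u, hju, rfl⟩, h⟩
    rw [cell_add_succ, cell_inj hkn] at h
    obtain ⟨rfl, rfl⟩ := h
    omega
  · intro h
    obtain ⟨u, rfl⟩ := Nat.exists_eq_add_of_lt h
    exact ⟨_, (cell_mem_staircaseIdeal_iff hkn).mpr (Nat.le_add_right _ u), cell_add_succ n i _⟩

lemma exists_add_eq_cell_iff (hkn : Nat.Coprime (k + 1) n) (hx : IsStaircase n x)
    (i : Fin (k + 1)) :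
    (∃ δ ∈ staircaseIdeal n x, δ + n = cell n i (x i)) ↔ gaps n x i = 0 := by
  have hmem : ∀ {i t}, cell n i t ∈ staircaseIdeal n x ↔ x i ≤ t :=
    cell_mem_staircaseIdeal_iff hkn
  constructor
  · rintro ⟨_, ⟨j, u, hju, rfl⟩, h⟩
    induction j using Fin.lastCases with
    | last =>
      rw [cell_last_add, cell_inj hkn] at h
      obtain ⟨rfl, h⟩ := h
      simp only [gaps_zero]
      omega
    | cast j =>
      rw [cell_castSucc_add, cell_inj hkn] at h
      obtain ⟨rfl, rfl⟩ := h
      simp only [gaps_succ]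
      omega
  · intro hgap
    induction i using Fin.cases with
    | zero =>
      rw [gaps_zero] at hgap
      obtain ⟨u, hu⟩ := Nat.exists_eq_add_of_le (show n ≤ x 0 by have := hx.2; omega)
      exact ⟨_, hmem.mpr (by omega : x (Fin.last k) ≤ u),
        by rw [cell_last_add, hu, Nat.add_comm u n]⟩
    | succ j =>
      rw [gaps_succ] at hgap
      exact ⟨_, hmem.mpr (by omega : x j.castSucc ≤ x j.succ), cell_castSucc_add n j _⟩

lemma minimalGenerators_staircaseIdeal (hn : 0 < n) (hkn : Nat.Coprime (k + 1) n)
    (hx : IsStaircase n x) :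
    minimalGenerators (AddSubmonoid.closure {k + 1, n}) (staircaseIdeal n x) =
      (fun i => cell n i (x i)) '' {i | gaps n x i ≠ 0} := by
  ext m
  rw [mem_minimalGenerators_closure_iff (by simp; omega)
    (isSemigroupIdeal_staircaseIdeal hx).2.2]
  constructor
  · rintro ⟨⟨i, t, hit, rfl⟩, hmin⟩
    obtain rfl : t = x i := le_antisymm (not_lt.mp fun hlt => by
      obtain ⟨δ, hδ, h⟩ := (exists_add_succ_eq_cell_iff hkn).mpr hlt
      exact hmin δ hδ _ (by simp) h) hit
    refine ⟨i, fun hgap => ?_, rfl⟩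
    obtain ⟨δ, hδ, h⟩ := (exists_add_eq_cell_iff hkn hx i).mpr hgap
    exact hmin δ hδ n (by simp) h
  · rintro ⟨i, hgap, rfl⟩
    refine ⟨(cell_mem_staircaseIdeal_iff hkn).mpr le_rfl, fun δ hδ g hg h => ?_⟩
    rcases hg with rfl | hg
    · exact lt_irrefl _ ((exists_add_succ_eq_cell_iff hkn).mp ⟨δ, hδ, h⟩)
    · rw [Set.mem_singleton_iff.mp hg] at h
      exact hgap ((exists_add_eq_cell_iff hkn hx i).mp ⟨δ, hδ, h⟩)

lemma semigroupIdealMinGens_staircaseIdeal (hn : 0 < n) (hkn : Nat.Coprime (k + 1) n)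
    (hx : IsStaircase n x) :
    semigroupIdealMinGens (AddSubmonoid.closure {k + 1, n}) (staircaseIdeal n x) =
      #{i | gaps n x i ≠ 0} := by
  rw [semigroupIdealMinGens_eq_ncard (isSemigroupIdeal_staircaseIdeal hx).2.2,
    minimalGenerators_staircaseIdeal hn hkn hx, Set.ncard_image_of_injective _
      fun i j h => ((cell_inj hkn).mp h).1, Set.ncard_eq_toFinset_card', Set.toFinset_ofPred]

end Staircase

section Heights

variable {k n : ℕ}

def heights (g : Fin (k + 1) → ℕ) (s : ℕ) : Fin (k + 1) → ℕ :=
  fun i => s + ∑ j ∈ Ioi i, g j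

variable {g : Fin (k + 1) → ℕ} {s : ℕ}

lemma heights_last : heights g s (Fin.last k) = s := by
  simp [heights, Finset.Ioi_eq_empty.mpr fun i _ => Fin.le_last i]

lemma heights_castSucc (j : Fin k) :
    heights g s j.castSucc = g j.succ + heights g s j.succ := by
  have : Ioi j.castSucc = insert j.succ (Ioi j.succ) := by
    ext i
    simp only [Finset.mem_Ioi, Finset.mem_insert, Fin.lt_def, Fin.ext_iff, Fin.val_castSucc,
      Fin.val_succ]
    omega
  simp only [heights, this, Finset.sum_insert (Finset.notMem_Ioi_self)]
  ring

lemma heights_zero_add : heights g s 0 + g 0 = s + ∑ j, g j := by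
  rw [heights, ← Finset.add_sum_erase _ _ (Finset.mem_univ 0)]
  have : Finset.univ.erase 0 = Ioi (0 : Fin (k + 1)) := by
    ext i
    simp
  rw [this]
  ring

lemma sum_heights : ∑ i, heights g s i = (k + 1) * s + ∑ j : Fin (k + 1), (j : ℕ) * g j := by
  simp only [heights, Finset.sum_add_distrib, Finset.sum_const, Finset.card_univ,
    Fintype.card_fin, smul_eq_mul]
  congr 1
  rw [Finset.sum_comm' (s' := fun j => Iio j) (t' := Finset.univ) (by simp)]
  simp [Fin.card_Iio]

lemma isStaircase_heights (hg : ∑ j, g j = n) : IsStaircase n (heights g s) := by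
  refine ⟨Fin.antitone_iff_succ_le.mpr fun j => by rw [heights_castSucc]; omega, ?_⟩
  have := heights_zero_add (g := g) (s := s)
  rw [heights_last]
  omega

lemma gaps_heights (hg : ∑ j, g j = n) : gaps n (heights g s) = g := by
  funext i
  induction i using Fin.cases with
  | zero =>
    have := heights_zero_add (g := g) (s := s)
    simp only [gaps_zero, heights_last]
    omega
  | succ j =>
    simp [heights_castSucc]

lemma heights_gaps {x : Fin (k + 1) → ℕ} (hx : IsStaircase n x) :
    heights (gaps n x) (x (Fin.last k)) = x := by
  funext i
  induction i using Fin.reverseInduction with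
  | last => exact heights_last
  | cast j ih =>
    rw [heights_castSucc, ih, gaps_succ]
    have := hx.1 (Fin.castSucc_le_succ j)
    omega

lemma sum_gaps {x : Fin (k + 1) → ℕ} (hx : IsStaircase n x) : ∑ j, gaps n x j = n := by
  have h := heights_zero_add (g := gaps n x) (s := x (Fin.last k))
  rw [heights_gaps hx, gaps_zero] at h
  have := hx.2
  omega

end Heights

section ShiftedFiber

variable {α : Type*} (C : Finset α) (w : α → ℕ)

/-- Summing over `shiftedFiber C w d l` for all `l` amounts to dividing by `1 - X ^ d`. -/
def shiftedFiber (d l : ℕ) : Finset (α × ℕ) :=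
  (C ×ˢ range (l + 1)).filter fun p => d * p.2 + w p.1 = l

variable {C w} {d : ℕ}

lemma mem_shiftedFiber (hd : 0 < d) {l : ℕ} {p : α × ℕ} :
    p ∈ shiftedFiber C w d l ↔ p.1 ∈ C ∧ d * p.2 + w p.1 = l := by
  have : p.2 ≤ d * p.2 := Nat.le_mul_of_pos_left _ hd
  simp only [shiftedFiber, Finset.mem_filter, Finset.mem_product, Finset.mem_range]
  constructor
  · rintro ⟨⟨h1, -⟩, h2⟩
    exact ⟨h1, h2⟩
  · rintro ⟨h1, h2⟩
    exact ⟨⟨h1, by omega⟩, h2⟩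

variable {M : Type*} [AddCommMonoid M] (φ : α → M)

lemma sum_shiftedFiber_filter_eq_zero (hd : 0 < d) (l : ℕ) :
    ∑ p ∈ shiftedFiber C w d l with p.2 = 0, φ p.1 = ∑ a ∈ C with w a = l, φ a := by
  refine Finset.sum_nbij' Prod.fst (fun a => (a, 0)) ?_ ?_ ?_ ?_ fun _ _ => rfl
  · rintro ⟨a, s⟩
    simp only [Finset.mem_filter, mem_shiftedFiber hd]
    rintro ⟨⟨ha, hl⟩, rfl⟩
    exact ⟨ha, by simpa using hl⟩
  · intro a
    simp +contextual [mem_shiftedFiber hd]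
  · rintro ⟨a, s⟩
    simp +contextual [Finset.mem_filter]
  · simp

lemma sum_shiftedFiber_filter_ne_zero (hd : 0 < d) (l : ℕ) :
    ∑ p ∈ shiftedFiber C w d l with p.2 ≠ 0, φ p.1 =
      if d ≤ l then ∑ p ∈ shiftedFiber C w d (l - d), φ p.1 else 0 := by
  split_ifs with hdl
  · refine Finset.sum_nbij' (fun p => (p.1, p.2 - 1)) (fun p => (p.1, p.2 + 1)) ?_ ?_ ?_ ?_
      fun _ _ => rfl
    · rintro ⟨a, s⟩
      simp only [Finset.mem_filter, mem_shiftedFiber hd]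
      rintro ⟨⟨ha, hl⟩, hs⟩
      obtain ⟨s, rfl⟩ := Nat.exists_eq_succ_of_ne_zero hs
      rw [Nat.mul_succ] at hl
      exact ⟨ha, by simp only [Nat.succ_sub_one]; omega⟩
    · rintro ⟨a, s⟩
      simp only [Finset.mem_filter, mem_shiftedFiber hd]
      rintro ⟨ha, hl⟩
      exact ⟨⟨ha, by rw [Nat.mul_succ]; omega⟩, s.succ_ne_zero⟩
    · rintro ⟨a, s⟩
      simp only [Finset.mem_filter, Prod.mk.injEq, true_and]
      omega
    · simp
  · refine Finset.sum_eq_zero fun p hp => absurd ?_ hdl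
    simp only [Finset.mem_filter, mem_shiftedFiber hd] at hp
    obtain ⟨⟨-, hl⟩, hs⟩ := hp
    have := Nat.le_mul_of_pos_right d (Nat.pos_of_ne_zero hs)
    omega

lemma sum_shiftedFiber (hd : 0 < d) (l : ℕ) :
    ∑ p ∈ shiftedFiber C w d l, φ p.1 = ∑ a ∈ C with w a = l, φ a +
      if d ≤ l then ∑ p ∈ shiftedFiber C w d (l - d), φ p.1 else 0 := by
  rw [← Finset.sum_filter_add_sum_filter_not _ (fun p => p.2 = 0),
    sum_shiftedFiber_filter_eq_zero φ hd, sum_shiftedFiber_filter_ne_zero φ hd]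

end ShiftedFiber

lemma Finset.sum_finsuppAntidiag_univ_eq_sum_piAntidiag {ι M : Type*} [Fintype ι] [DecidableEq ι]
    [AddCommMonoid M] (n : ℕ) (F : (ι → ℕ) → M) :
    ∑ f ∈ univ.finsuppAntidiag n, F ⇑f = ∑ g ∈ univ.piAntidiag n, F g :=
  Finset.sum_equiv Finsupp.equivFunOnFinite (by simp) fun _ _ => rfl

section PowerSeries

open PowerSeries

variable {R : Type*} [CommRing R]

lemma one_sub_X_pow_mul_eq_mk {α : Type*} {C : Finset α} {w : α → ℕ} {d : ℕ} (hd : 0 < d)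
    {φ : α → R} {G : R⟦X⟧}
    (hG : ∀ l, coeff l G = ∑ p ∈ shiftedFiber C w d l, φ p.1) :
    (1 - X ^ d : R⟦X⟧) * G = PowerSeries.mk fun l => ∑ a ∈ C with w a = l, φ a := by
  ext l
  rw [sub_mul, one_mul, mul_comm, map_sub, coeff_mul_X_pow', hG, sum_shiftedFiber φ hd, coeff_mk]
  split_ifs <;> simp [hG]

lemma coeff_prod_one_add_C_mul_geometric (c : R) (k n : ℕ) :
    coeff n (∏ i ∈ range k,
      (1 + C (C c) * PowerSeries.mk fun m => if m = 0 then 0 else (X : R⟦X⟧) ^ (i * m))) =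
      PowerSeries.mk fun l =>
        ∑ g ∈ (univ : Finset (Fin k)).piAntidiag n with ∑ j : Fin k, (j : ℕ) * g j = l,
          c ^ #{i | g i ≠ 0} := by
  classical
  have hfactor : ∀ (i : ℕ) (m : ℕ), coeff m
      (1 + C (C c) * PowerSeries.mk fun m => if m = 0 then 0 else (X : R⟦X⟧) ^ (i * m)) =
      C (c ^ if m = 0 then 0 else 1) * X ^ (i * m) := by
    intro i m
    rcases eq_or_ne m 0 with rfl | hm <;> simp [coeff_one, *]
  ext l
  rw [← Fin.prod_univ_eq_prod_range, coeff_prod, map_sum, coeff_mk, Finset.sum_filter]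
  simp only [hfactor]
  refine (Finset.sum_finsuppAntidiag_univ_eq_sum_piAntidiag n fun g => coeff l
    (∏ i : Fin k, C (c ^ if g i = 0 then 0 else 1) * X ^ ((i : ℕ) * g i))).trans
    (Finset.sum_congr rfl fun g _ => ?_)
  simp only [Finset.prod_mul_distrib, ← map_prod, Finset.prod_pow_eq_pow_sum, coeff_C_mul_X_pow,
    Finset.card_filter]
  simp_rw [@eq_comm _ l, ne_eq, ite_not]

end PowerSeries

lemma setOf_eq_closure_pair (a b : ℕ) :
    {m : ℕ | ∃ u v : ℕ, m = u * a + v * b} = AddSubmonoid.closure {a, b} := by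
  ext m
  simp [AddSubmonoid.mem_closure_pair, eq_comm]

section Counting

variable {k n : ℕ}

def staircaseParams (k n l : ℕ) : Finset ((Fin (k + 1) → ℕ) × ℕ) :=
  shiftedFiber (univ.piAntidiag n) (fun g => ∑ j : Fin (k + 1), (j : ℕ) * g j) (k + 1) l

lemma mem_staircaseParams {l : ℕ} {p : (Fin (k + 1) → ℕ) × ℕ} :
    p ∈ staircaseParams k n l ↔ ∑ j, p.1 j = n ∧ ∑ i, heights p.1 p.2 i = l := by
  simp [staircaseParams, mem_shiftedFiber k.succ_pos, Finset.mem_piAntidiag, sum_heights]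

lemma image_staircaseParams (hkn : Nat.Coprime (k + 1) n) (l : ℕ) :
    (fun p : (Fin (k + 1) → ℕ) × ℕ => staircaseIdeal n (heights p.1 p.2)) ''
      ↑(staircaseParams k n l) =
      {Δ | IsSemigroupIdeal (AddSubmonoid.closure {k + 1, n}) Δ ∧
        ((AddSubmonoid.closure {k + 1, n} : Set ℕ) \ Δ).ncard = l} := by
  ext Δ
  constructor
  · rintro ⟨p, hp, rfl⟩
    rw [Finset.mem_coe, mem_staircaseParams] at hp
    exact ⟨isSemigroupIdeal_staircaseIdeal (isStaircase_heights hp.1),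
      (ncard_closure_diff_staircaseIdeal hkn _).trans hp.2⟩
  · rintro ⟨hΔ, rfl⟩
    obtain ⟨x, hx, rfl⟩ := exists_isStaircase_staircaseIdeal_eq hΔ
    refine ⟨(gaps n x, x (Fin.last k)), ?_, by simp [heights_gaps hx]⟩
    rw [Finset.mem_coe, mem_staircaseParams, heights_gaps hx,
      ncard_closure_diff_staircaseIdeal hkn]
    exact ⟨sum_gaps hx, rfl⟩

lemma injOn_staircaseParams (hkn : Nat.Coprime (k + 1) n) (l : ℕ) :
    Set.InjOn (fun p : (Fin (k + 1) → ℕ) × ℕ => staircaseIdeal n (heights p.1 p.2))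
      ↑(staircaseParams k n l) := by
  rintro ⟨g, s⟩ hp ⟨g', s'⟩ hp' h
  rw [Finset.mem_coe, mem_staircaseParams] at hp hp'
  have hh := staircaseIdeal_injective hkn h
  have hs : s = s' := by simpa [heights_last] using congrFun hh (Fin.last k)
  have hg : g = g' := by simpa [gaps_heights hp.1, gaps_heights hp'.1] using congrArg (gaps n) hh
  rw [hs, hg]

lemma finsum_semigroupIdeals_eq_sum_staircaseParams (hn : 0 < n)
    (hkn : Nat.Coprime (k + 1) n) {M : Type*} [AddCommMonoid M] (f : ℕ → M) (l : ℕ) :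
    ∑ᶠ Δ ∈ {Δ : Set ℕ | IsSemigroupIdeal (AddSubmonoid.closure {k + 1, n}) Δ ∧
        ((AddSubmonoid.closure {k + 1, n} : Set ℕ) \ Δ).ncard = l},
      f (semigroupIdealMinGens (AddSubmonoid.closure {k + 1, n}) Δ) =
    ∑ p ∈ staircaseParams k n l, f #{i | p.1 i ≠ 0} := by
  rw [← image_staircaseParams hkn, finsum_mem_image (injOn_staircaseParams hkn l),
    finsum_mem_coe_finset]
  refine Finset.sum_congr rfl fun p hp => ?_
  rw [mem_staircaseParams] at hp
  rw [semigroupIdealMinGens_staircaseIdeal hn hkn (isStaircase_heights hp.1), gaps_heights hp.1]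

end Counting

/-- For coprime positive `k, n`, `Γ = ⟨k,n⟩`, and
`G(q,a) = Σ_Δ q^{c(Δ)} (1−a)^{m(Δ)} ∈ (ℤ[a])[[q]]` (sum over semigroup ideals of `Γ`),
`(1 − q^k)·G(q,a)` is the coefficient of `ξ^n` in
`∏_{i=0}^{k−1} (1 + (1−a) Σ_{m ≥ 1} ξ^m q^{im})` computed in `(ℤ[a][[q]])[[ξ]]`. -/
theorem gen_function_staircase_residue (k n : ℕ) (hk : 0 < k) (hn : 0 < n)
    (hkn : Nat.Coprime k n)
    (Γ : Set ℕ) (hΓ : Γ = {m : ℕ | ∃ a b : ℕ, m = a * k + b * n})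
    (G : PowerSeries (Polynomial ℤ))
    (hG : ∀ l, PowerSeries.coeff (R := Polynomial ℤ) l G =
      ∑ᶠ Δ ∈ {Δ : Set ℕ | IsSemigroupIdeal Γ Δ ∧ (Γ \ Δ).ncard = l},
        ((1 : Polynomial ℤ) - Polynomial.X) ^ semigroupIdealMinGens Γ Δ) :
    (1 - PowerSeries.X ^ k) * G =
      PowerSeries.coeff (R := PowerSeries (Polynomial ℤ)) n
        (∏ i ∈ Finset.range k,
          (1 + (PowerSeries.C (R := PowerSeries (Polynomial ℤ)))
              (PowerSeries.C (R := Polynomial ℤ) ((1 : Polynomial ℤ) - Polynomial.X)) *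
            PowerSeries.mk (fun m =>
              if m = 0 then 0
              else (PowerSeries.X : PowerSeries (Polynomial ℤ)) ^ (i * m)))) := by
  obtain ⟨k, rfl⟩ := Nat.exists_eq_add_one_of_ne_zero hk.ne'
  rw [hΓ, setOf_eq_closure_pair] at hG
  have hG' : ∀ l, PowerSeries.coeff l G =
      ∑ p ∈ staircaseParams k n l, (1 - Polynomial.X : Polynomial ℤ) ^ #{i | p.1 i ≠ 0} :=
    fun l => (hG l).trans (finsum_semigroupIdeals_eq_sum_staircaseParams hn hkn _ l)
  rw [coeff_prod_one_add_C_mul_geometric]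
  exact one_sub_X_pow_mul_eq_mk k.add_one_pos hG'
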